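/- arXiv:1503.07511 — 13 statements merged into one kernel-verified Lean document; each statement's English description precedes it below -/
import Mathlib

section
/- If f is string submodular (i.e., prefix monotone and has the diminishing-return property) and satisfies f(G_i ⊕ O_K) ≥ f(O_K) for all i = 1, …, K−1, then any greedy strategy G_K satisfies f(G_K) ≥ (1 − (1 − 1/K)^K)·f(O_K), and moreover (1 − (1 − 1/K)^K)·f(O_K) > (1 − e^{−1})·f(O_K) whenever f(O_K) > 0. -/
/-- If `f` is string submodular (prefix monotone and diminishing-return) and
`f(G_i ⊕ O_K) ≥ f(O_K)` for `i = 1, …, K−1`, then any greedy strategy satisfies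
`f(G_K) ≥ (1 − (1 − 1/K)^K)·f(O_K)`, and this factor strictly beats `1 − e⁻¹`
whenever `f(O_K) > 0`. Strings are lists; `G_i = (g 0, …, g (i−1))`,
`O_K = (o 0, …, o (K−1))`. -/
theorem stmt0 {α : Type*} [Nonempty α] (K : ℕ) (hK : 1 ≤ K)
    (f : List α → ℝ) (hf0 : f [] = 0) (g o : ℕ → α)
    -- O_K is an optimal strategy of length K
    (hopt : ∀ M : List α, M.length ≤ K → f ((List.range K).map o) ≥ f M)
    -- G_K is a greedy strategy
    (hgreedy : ∀ i < K, ∀ a : α,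
      f ((List.range i).map g ++ [g i]) ≥ f ((List.range i).map g ++ [a]))
    -- f is prefix monotone
    (hprefix : ∀ M N : List α, f (M ++ N) ≥ f M)
    -- f has the diminishing-return property
    (hdim : ∀ M N : List α, M <+: N → ∀ a : α,
      f (M ++ [a]) - f M ≥ f (N ++ [a]) - f N)
    -- f(G_i ⊕ O_K) ≥ f(O_K) for all i = 1, …, K−1
    (hGO : ∀ i : ℕ, 1 ≤ i → i ≤ K - 1 →
      f ((List.range i).map g ++ (List.range K).map o) ≥ f ((List.range K).map o)) :
    f ((List.range K).map g) ≥
      (1 - (1 - 1 / (K : ℝ)) ^ K) * f ((List.range K).map o) ∧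
    (f ((List.range K).map o) > 0 →
      (1 - (1 - 1 / (K : ℝ)) ^ K) * f ((List.range K).map o) >
        (1 - Real.exp (-1)) * f ((List.range K).map o)) := by

  set O : List α := (List.range K).map o with hO
  set G : ℕ → List α := fun i => (List.range i).map g with hG
  have hOlen : O.length = K := by simp [hO]
  have hGsucc : ∀ i, G (i+1) = G i ++ [g i] := by
    intro i; simp [hG, List.range_succ]
  have hKpos : (0:ℝ) < K := by exact_mod_cast hK
  have hbase : (0:ℝ) ≤ 1 - 1/(K:ℝ) := by
    rw [sub_nonneg, div_le_one hKpos]; exact_mod_cast hK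
  have hstep : ∀ i < K, ∀ L : List α,
      f (G i ++ L) ≤ f (G i) + L.length * (f (G (i+1)) - f (G i)) := by
    intro i hi L
    induction L using List.reverseRecOn with
    | nil => simp
    | append_singleton L a ih =>
      have hpre : G i <+: G i ++ L := List.prefix_append _ _
      have hd := hdim (G i) (G i ++ L) hpre a
      have hg := hgreedy i hi a
      rw [hGsucc i]
      rw [hGsucc i] at ih
      rw [← List.append_assoc]
      push_cast [List.length_append, List.length_singleton]
      have hg' : f (G i ++ [g i]) ≥ f (G i ++ [a]) := hg
      nlinarith [ih, hd, hg']
  have hrec : ∀ i ≤ K, f O - f (G i) ≤ (1 - 1/(K:ℝ))^i * f O := by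
    intro i hi
    induction i with
    | zero => simp [hG, hf0]
    | succ i ih =>
      have hiK : i < K := hi
      have ih' := ih (le_of_lt hiK)
      have hGO' : f (G i ++ O) ≥ f O := by
        rcases Nat.eq_zero_or_pos i with h0 | h1
        · subst h0; simp [hG]
        · exact hGO i h1 (by omega)
      have hA := hstep i hiK O
      rw [hOlen] at hA
      have hB : f O ≤ f (G i) + K * (f (G (i+1)) - f (G i)) := le_trans hGO' hA
      have h1 : f O - f (G (i+1)) ≤ (1 - 1/(K:ℝ)) * (f O - f (G i)) := by
        rw [show (1:ℝ) - 1/(K:ℝ) = ((K:ℝ)-1)/K by field_simp, div_mul_eq_mul_div,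
          le_div_iff₀ hKpos]
        nlinarith [hB]
      calc f O - f (G (i+1)) ≤ (1 - 1/(K:ℝ)) * (f O - f (G i)) := h1
        _ ≤ (1 - 1/(K:ℝ)) * ((1 - 1/(K:ℝ))^i * f O) :=
            mul_le_mul_of_nonneg_left ih' hbase
        _ = (1 - 1/(K:ℝ))^(i+1) * f O := by ring
  have hfin := hrec K le_rfl
  constructor
  · nlinarith [hfin]
  · intro hpos
    have hKne : (K:ℝ) ≠ 0 := ne_of_gt hKpos
    have hx : -1/(K:ℝ) ≠ 0 := by
      simp [div_eq_mul_inv, hKne]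
    have h1 : 1 - 1/(K:ℝ) < Real.exp (-1/(K:ℝ)) := by
      have h := Real.add_one_lt_exp hx
      have he : (1:ℝ) - 1/(K:ℝ) = -1/(K:ℝ) + 1 := by ring
      rw [he]; exact h
    have h2 : (1 - 1/(K:ℝ))^K < Real.exp (-1/(K:ℝ))^K :=
      pow_lt_pow_left₀ h1 hbase (by omega)
    have h3 : Real.exp (-1/(K:ℝ))^K = Real.exp (-1) := by
      rw [← Real.exp_nat_mul]
      congr 1
      field_simp
    rw [h3] at h2
    nlinarith [h2, hpos]
end

section
/- If f is string submodular (prefix monotone and with the diminishing-return property), postfix monotone (f(M ⊕ N) ≥ f(N) for all M, N ∈ 𝔸*), and σ ∈ (0, 1] is such that for every a ∈ 𝔸 and M ∈ 𝔸*, f((a) ⊕ M) − f(M) ≥ (1 − σ)·(f((a)) − f(∅)), then any greedy strategy G_K satisfies f(G_K) ≥ (1/σ)·(1 − (1 − σ/K)^K)·f(O_K). -/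
/-!
Adding `O_K` after the greedy prefix `G_i` costs at most `K` greedy increments, by diminishing
returns; adding `G_i` before `O_K` gains at least `f(O_K) + (1 - σ) f(G_i)`, by the curvature bound
and subadditivity. Together these give `f(G_{i+1}) ≥ (1 - σ/K) f(G_i) + f(O_K)/K`, and unrolling this
linear recurrence from `f(G_0) = 0` yields the geometric sum `(1/σ)(1 - (1 - σ/K)^K) f(O_K)`.
-/

open Finset

section StringFunctions

variable {α : Type*}

def DiminishingReturns (f : List α → ℝ) : Prop :=
  ∀ M N : List α, M <+: N → ∀ a : α, f (M ++ [a]) - f M ≥ f (N ++ [a]) - f N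

def BackwardCurvatureLE (f : List α → ℝ) (σ : ℝ) : Prop :=
  ∀ (a : α) (M : List α), f ([a] ++ M) - f M ≥ (1 - σ) * (f [a] - f [])

variable {f : List α → ℝ}

namespace DiminishingReturns

theorem sub_le_sum_map (hf : DiminishingReturns f) (M N : List α) :
    f (M ++ N) - f M ≤ (N.map fun a => f (M ++ [a]) - f M).sum := by
  induction N using List.reverseRecOn with
  | nil => simp
  | append_singleton N a ih =>
    have hmarginal := hf M (M ++ N) (List.prefix_append M N) a
    rw [← List.append_assoc, List.map_append, List.sum_append, List.map_singleton,
      List.sum_singleton]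
    linarith

theorem le_sum_map_singleton (hf : DiminishingReturns f) (hf0 : f [] = 0) (M : List α) :
    f M ≤ (M.map fun a => f [a]).sum := by
  simpa [hf0] using hf.sub_le_sum_map [] M

theorem le_add_length_mul {M : List α} {b : α} (hf : DiminishingReturns f)
    (hb : ∀ a, f (M ++ [a]) ≤ f (M ++ [b])) (N : List α) :
    f (M ++ N) ≤ f M + N.length * (f (M ++ [b]) - f M) := by
  have hsum : (N.map fun a => f (M ++ [a]) - f M).sum ≤ N.length • (f (M ++ [b]) - f M) := by
    simpa using List.sum_le_card_nsmul (N.map fun a => f (M ++ [a]) - f M) _ fun x hx => by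
      obtain ⟨a, -, rfl⟩ := List.mem_map.1 hx
      linarith [hb a]
  rw [nsmul_eq_mul] at hsum
  linarith [hf.sub_le_sum_map M N]

end DiminishingReturns

theorem BackwardCurvatureLE.add_mul_sum_le {σ : ℝ} (hf : BackwardCurvatureLE f σ)
    (hf0 : f [] = 0) (M N : List α) :
    f N + (1 - σ) * (M.map fun a => f [a]).sum ≤ f (M ++ N) := by
  induction M with
  | nil => simp
  | cons a M ih =>
    have hprepend := hf a (M ++ N)
    rw [hf0, sub_zero, List.singleton_append] at hprepend
    rw [List.map_cons, List.sum_cons, mul_add, List.cons_append]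
    linarith

theorem add_one_sub_mul_le_append {σ : ℝ} (hdim : DiminishingReturns f)
    (hcurv : BackwardCurvatureLE f σ) (hf0 : f [] = 0) (hσ1 : σ ≤ 1) (M N : List α) :
    f N + (1 - σ) * f M ≤ f (M ++ N) := by
  have hsub := mul_le_mul_of_nonneg_left (hdim.le_sum_map_singleton hf0 M) (sub_nonneg.2 hσ1)
  linarith [hcurv.add_mul_sum_le hf0 M N]

theorem length_sub_mul_add_le_length_mul_of_greedy {σ : ℝ} {M : List α} {b : α}
    (hdim : DiminishingReturns f) (hcurv : BackwardCurvatureLE f σ) (hf0 : f [] = 0)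
    (hσ1 : σ ≤ 1) (hb : ∀ a, f (M ++ [a]) ≤ f (M ++ [b])) (N : List α) :
    (N.length - σ) * f M + f N ≤ N.length * f (M ++ [b]) := by
  linarith [add_one_sub_mul_le_append hdim hcurv hf0 hσ1 M N, hdim.le_add_length_mul hb N]

theorem mul_geom_sum_le_of_mul_add_le {x : ℕ → ℝ} {q b : ℝ} {K : ℕ} (hq : 0 ≤ q) (hx0 : 0 ≤ x 0)
    (hstep : ∀ n < K, q * x n + b ≤ x (n + 1)) :
    ∀ n ≤ K, b * ∑ j ∈ range n, q ^ j ≤ x n := by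
  intro n hn
  induction n with
  | zero => simpa using hx0
  | succ n ih =>
    have hprev := mul_le_mul_of_nonneg_left (ih (by omega)) hq
    calc b * ∑ j ∈ range (n + 1), q ^ j = q * (b * ∑ j ∈ range n, q ^ j) + b := by
          rw [geom_sum_succ]; ring
      _ ≤ x (n + 1) := by linarith [hstep n (by omega)]

end StringFunctions

theorem stmt1_general {α : Type*} (K : ℕ) (hK : 1 ≤ K)
    (f : List α → ℝ) (hf0 : f [] = 0) (g o : ℕ → α) (σ : ℝ)
    (hσ0 : 0 < σ) (hσ1 : σ ≤ 1)
    -- G_K is a greedy strategy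
    (hgreedy : ∀ i < K, ∀ a : α,
      f ((List.range i).map g ++ [g i]) ≥ f ((List.range i).map g ++ [a]))
    -- f has the diminishing-return property
    (hdim : ∀ M N : List α, M <+: N → ∀ a : α,
      f (M ++ [a]) - f M ≥ f (N ++ [a]) - f N)
    -- the total backward curvature of f is at most σ
    (hcurv : ∀ (a : α) (M : List α),
      f ([a] ++ M) - f M ≥ (1 - σ) * (f [a] - f [])) :
    f ((List.range K).map g) ≥
      (1 / σ) * (1 - (1 - σ / (K : ℝ)) ^ K) * f ((List.range K).map o) := by
  set O := (List.range K).map o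
  have hKpos : (0 : ℝ) < K := by exact_mod_cast hK
  have hσK : σ / K ≤ 1 := (div_le_one hKpos).2 (hσ1.trans (by exact_mod_cast hK))
  have hstep : ∀ i < K, (1 - σ / K) * f ((List.range i).map g) + f O / K ≤
      f ((List.range (i + 1)).map g) := by
    intro i hi
    have hbound := length_sub_mul_add_le_length_mul_of_greedy hdim hcurv hf0 hσ1
      (hgreedy i hi) O
    rw [List.length_map, List.length_range] at hbound
    rw [List.range_succ, List.map_append, List.map_singleton]
    calc (1 - σ / K) * f ((List.range i).map g) + f O / K
        = ((K - σ) * f ((List.range i).map g) + f O) / K := by field_simp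
      _ ≤ _ := (div_le_iff₀' hKpos).2 hbound
  have hgeom := mul_geom_sum_le_of_mul_add_le (sub_nonneg.2 hσK) (by simp [hf0]) hstep K le_rfl
  rw [geom_sum_eq (by simp [hσ0.ne', hKpos.ne']), sub_sub_cancel_left] at hgeom
  convert hgeom using 1
  field_simp [hσ0.ne', hKpos.ne']
  ring

/-- If `f` is string submodular, postfix monotone, and has total backward
curvature at most `σ ∈ (0,1]`, then any greedy strategy satisfies
`f(G_K) ≥ (1/σ)·(1 − (1 − σ/K)^K)·f(O_K)`. -/
theorem stmt1 {α : Type*} [Nonempty α] (K : ℕ) (hK : 1 ≤ K)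
    (f : List α → ℝ) (hf0 : f [] = 0) (g o : ℕ → α) (σ : ℝ)
    (hσ0 : 0 < σ) (hσ1 : σ ≤ 1)
    -- O_K is an optimal strategy of length K
    (hopt : ∀ M : List α, M.length ≤ K → f ((List.range K).map o) ≥ f M)
    -- G_K is a greedy strategy
    (hgreedy : ∀ i < K, ∀ a : α,
      f ((List.range i).map g ++ [g i]) ≥ f ((List.range i).map g ++ [a]))
    -- f is prefix monotone
    (hprefix : ∀ M N : List α, f (M ++ N) ≥ f M)
    -- f has the diminishing-return property
    (hdim : ∀ M N : List α, M <+: N → ∀ a : α,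
      f (M ++ [a]) - f M ≥ f (N ++ [a]) - f N)
    -- f is postfix monotone
    (hpostfix : ∀ M N : List α, f (M ++ N) ≥ f N)
    -- the total backward curvature of f is at most σ
    (hcurv : ∀ (a : α) (M : List α),
      f ([a] ++ M) - f M ≥ (1 - σ) * (f [a] - f [])) :
    f ((List.range K).map g) ≥
      (1 / σ) * (1 - (1 - σ / (K : ℝ)) ^ K) * f ((List.range K).map o) :=
  stmt1_general K hK f hf0 g o σ hσ0 hσ1 hgreedy hdim hcurv
end

section
/- If f is K-submodular and K-GO-concave, then any greedy strategy G_K satisfies f(G_K) ≥ (1 − (1 − 1/K)^K)·f(O_K). -/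
/-- If `f` is K-submodular (K-monotone and K-diminishing) and K-GO-concave,
then any greedy strategy satisfies `f(G_K) ≥ (1 − (1 − 1/K)^K)·f(O_K)`.
Here `G_i = (g 0, …, g (i−1))`, `O_K = (o 0, …, o (K−1))`, and
`Ō_{K−i} = (o i, …, o (K−1))`. -/
theorem stmt2 {α : Type*} [Nonempty α] (K : ℕ) (hK : 1 ≤ K)
    (f : List α → ℝ) (hf0 : f [] = 0) (g o : ℕ → α)
    -- O_K is an optimal strategy of length K
    (hopt : ∀ M : List α, M.length ≤ K → f ((List.range K).map o) ≥ f M)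
    -- G_K is a greedy strategy
    (hgreedy : ∀ i < K, ∀ a : α,
      f ((List.range i).map g ++ [g i]) ≥ f ((List.range i).map g ++ [a]))
    -- f is K-monotone
    (hmono : ∀ M N : List α, M.length + N.length ≤ K → f (M ++ N) ≥ f M)
    -- f is K-diminishing
    (hdim : ∀ M N : List α, M <+: N → N.length ≤ K - 1 → ∀ a : α,
      f (M ++ [a]) - f M ≥ f (N ++ [a]) - f N)
    -- f is K-GO-concave
    (hGO : ∀ i : ℕ, 1 ≤ i → i ≤ K - 1 →
      f ((List.range i).map g ++ (List.range (K - i)).map (fun j => o (i + j))) ≥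
        ((i : ℝ) / K) * f ((List.range i).map g) +
          (1 - (i : ℝ) / K) * f ((List.range K).map o)) :
    f ((List.range K).map g) ≥
      (1 - (1 - 1 / (K : ℝ)) ^ K) * f ((List.range K).map o) := by
  have hKR : (0 : ℝ) < K := by exact_mod_cast hK
  have hrange : ∀ (h : ℕ → α) (m : ℕ),
      (List.range (m+1)).map h = (List.range m).map h ++ [h m] := by
    intro h m
    rw [List.range_succ, List.map_append]; rfl
  set F : ℕ → ℝ := fun i => f ((List.range i).map g) with hF
  set opt : ℝ := f ((List.range K).map o) with hopt'
  -- base: opt ≤ K * F 1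
  have hF1def : F 1 = f [g 0] := by
    rw [hF]; simp only; rw [hrange g 0]; simp
  have hbase_aux : ∀ m, m ≤ K → f ((List.range m).map o) ≤ m * F 1 := by
    intro m
    induction m with
    | zero => intro _; simpa using hf0.le
    | succ m ih =>
      intro hm
      have hm' : m ≤ K := Nat.le_of_succ_le hm
      have hdim' := hdim [] ((List.range m).map o) List.nil_prefix
        (by simp; omega) (o m)
      have hg := hgreedy 0 hK (o m)
      simp only [List.range_zero, List.map_nil, List.nil_append] at hdim' hg
      rw [hrange o m]
      have := ih hm'
      rw [hf0] at hdim'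
      rw [hF1def] at this ⊢
      push_cast
      linarith
  have hF1 : opt ≤ K * F 1 := by
    have h := hbase_aux K le_rfl
    rw [hopt']
    exact_mod_cast h
  -- step inequality
  have hstep : ∀ i, 1 ≤ i → i ≤ K - 1 →
      opt - F (i+1) ≤ (1 - 1/(K:ℝ)) * (opt - F i) := by
    intro i hi1 hiK
    have hiK' : i < K := by omega
    have hFi : f ((List.range i).map g) = F i := rfl
    have hFsucc : F (i+1) = f ((List.range i).map g ++ [g i]) := by
      rw [hF]; simp only; rw [hrange g i]
    -- telescoping bound
    have htele : ∀ m, m ≤ K - i →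
        f ((List.range i).map g ++ (List.range m).map (fun j => o (i + j))) ≤
          F i + m * (F (i+1) - F i) := by
      intro m
      induction m with
      | zero => intro _; simp [hFi]
      | succ m ih =>
        intro hm
        have hm' : m ≤ K - i := Nat.le_of_succ_le hm
        have hlen : ((List.range i).map g ++
            (List.range m).map (fun j => o (i + j))).length ≤ K - 1 := by
          simp; omega
        have hdim' := hdim ((List.range i).map g)
          ((List.range i).map g ++ (List.range m).map (fun j => o (i + j)))
          (List.prefix_append _ _) hlen (o (i + m))
        have hg := hgreedy i hiK' (o (i + m))
        rw [← hFsucc] at hg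
        rw [hFi] at hdim'
        have ihm := ih hm'
        rw [hrange (fun j => o (i+j)) m, ← List.append_assoc]
        push_cast
        linarith
    have hGO' := hGO i hi1 hiK
    rw [hFi] at hGO'
    have htot := htele (K - i) le_rfl
    have hKi : ((K - i : ℕ) : ℝ) = (K : ℝ) - i := by
      have hle : i ≤ K := le_of_lt hiK'
      push_cast [hle]; ring
    rw [hKi] at htot
    have hiR : (i : ℝ) < K := by exact_mod_cast hiK'
    have hpos : (0:ℝ) < (K:ℝ) - i := by linarith
    have key : (1 - (i:ℝ)/K) * (opt - F i) ≤ ((K:ℝ) - i) * (F (i+1) - F i) := by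
      nlinarith [hGO', htot]
    have e1 : (1 - (i:ℝ)/K) * (opt - F i) = ((K:ℝ)-i) * ((opt - F i)/K) := by
      field_simp
    rw [e1] at key
    have key2 : (opt - F i)/K ≤ F (i+1) - F i := le_of_mul_le_mul_left key hpos
    have : opt - F (i+1) ≤ (opt - F i) - (opt - F i)/K := by linarith
    linarith [this, show (opt - F i) - (opt - F i)/K = (1 - 1/(K:ℝ)) * (opt - F i) by ring]
  have hc0 : (0:ℝ) ≤ 1 - 1/(K:ℝ) := by
    have h1 : (1:ℝ) ≤ K := by exact_mod_cast hK
    have h2 : 1/(K:ℝ) ≤ 1 := by rw [div_le_one hKR]; exact h1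
    linarith
  have hmain : ∀ i, 1 ≤ i → i ≤ K → opt - F i ≤ (1 - 1/(K:ℝ))^i * opt := by
    intro i
    induction i with
    | zero => omega
    | succ i ih =>
      intro _ hiK
      by_cases hi0 : i = 0
      · subst hi0
        have h1 : opt / K ≤ F 1 := by
          rw [div_le_iff₀ hKR]; linarith [hF1]
        have h2 : opt - F 1 ≤ opt - opt/K := by linarith
        have h3 : opt - opt/K = (1 - 1/(K:ℝ))^1 * opt := by ring
        linarith
      · have hi1 : 1 ≤ i := by omega
        have hiK1 : i ≤ K - 1 := by omega
        have h1 := hstep i hi1 hiK1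
        have h2 := ih hi1 (by omega)
        calc opt - F (i+1) ≤ (1 - 1/(K:ℝ)) * (opt - F i) := h1
          _ ≤ (1 - 1/(K:ℝ)) * ((1 - 1/(K:ℝ))^i * opt) :=
              mul_le_mul_of_nonneg_left h2 hc0
          _ = (1 - 1/(K:ℝ))^(i+1) * opt := by ring
  have hfin := hmain K hK le_rfl
  have hFK : f ((List.range K).map g) = F K := rfl
  rw [hFK]
  linarith
end

section
/- Suppose f is K-submodular and K-GO-concave, and let η ∈ (0, 1] satisfy, for every 1 ≤ i ≤ K − 1, K·f(G_i) − (K·f(G_i ⊕ Ō_{K−i}) − (K − i)·f(O_K)) ≤ η·(K − i)·f(G_i). Then the greedy strategy satisfies f(G_K) ≥ (1/η)·(1 − (1 − η/K)^K)·f(O_K). -/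
/-!
Write `F i = f(G_i)` and `OPT = f(O_K)`. Extending `G_i` by the `K - i` actions of `Ō_{K-i}`
gains, by diminishing returns, at most `K - i` times the greedy gain `F (i+1) - F i`.
Combined with the curvature bound this gives `OPT - η F i ≤ K (F (i+1) - F i)`, i.e. the linear
recurrence `F (i+1) ≥ (1 - η/K) F i + OPT/K`, whose solution from `F 0 = 0` is the claimed bound.
-/

open Finset

lemma mul_geom_sum_le_of_le_mul_add {x : ℕ → ℝ} {c b : ℝ} {n : ℕ} (hc : 0 ≤ c) (h0 : 0 ≤ x 0)
    (hstep : ∀ i < n, c * x i + b ≤ x (i + 1)) : b * ∑ i ∈ range n, c ^ i ≤ x n := by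
  induction n with
  | zero => simpa using h0
  | succ n ih =>
    have ih := ih fun i hi => hstep i (Nat.lt_succ_of_lt hi)
    calc b * ∑ i ∈ range (n + 1), c ^ i = c * (b * ∑ i ∈ range n, c ^ i) + b := by
          rw [geom_sum_succ]; ring
      _ ≤ c * x n + b := by gcongr
      _ ≤ x (n + 1) := hstep n n.lt_succ_self

section Strategies

variable {α : Type*}

def IsDiminishing (K : ℕ) (f : List α → ℝ) : Prop :=
  ∀ M N : List α, M <+: N → N.length ≤ K - 1 → ∀ a : α, f (M ++ [a]) - f M ≥ f (N ++ [a]) - f N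

lemma apply_append_le_of_isDiminishing {K : ℕ} {f : List α → ℝ} (hdim : IsDiminishing K f)
    {M : List α} {b : α} (hb : ∀ a, f (M ++ [a]) ≤ f (M ++ [b])) (N : List α)
    (hN : M.length + N.length ≤ K) :
    f (M ++ N) ≤ f M + N.length * (f (M ++ [b]) - f M) := by
  induction N using List.reverseRecOn with
  | nil => simp
  | append_singleton N a ih =>
    simp only [List.length_append, List.length_singleton] at hN
    have hgain := hdim M (M ++ N) (List.prefix_append M N) (by simp; omega) a
    have hprev := ih (by omega)
    rw [← List.append_assoc]
    simp only [List.length_append, List.length_singleton, Nat.cast_add, Nat.cast_one]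
    linarith [hb a]

lemma opt_sub_le_greedy_gain {K : ℕ} {f : List α → ℝ} (hf0 : f [] = 0) {g o : ℕ → α} {η : ℝ}
    (hgreedy : ∀ i < K, ∀ a : α,
      f ((List.range i).map g ++ [g i]) ≥ f ((List.range i).map g ++ [a]))
    (hdim : IsDiminishing K f)
    (hcurv : ∀ i : ℕ, 1 ≤ i → i ≤ K - 1 →
      (K : ℝ) * f ((List.range i).map g) -
          ((K : ℝ) * f ((List.range i).map g ++
              (List.range (K - i)).map (fun j => o (i + j))) -
            ((K : ℝ) - i) * f ((List.range K).map o)) ≤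
        η * (((K : ℝ) - i) * f ((List.range i).map g)))
    {i : ℕ} (hi : i < K) :
    f ((List.range K).map o) - η * f ((List.range i).map g) ≤
      K * (f ((List.range (i + 1)).map g) - f ((List.range i).map g)) := by
  set G := (List.range i).map g
  set X := f (G ++ (List.range (K - i)).map (fun j => o (i + j)))
  have hext : X ≤ f G + ((K : ℝ) - i) * (f ((List.range (i + 1)).map g) - f G) := by
    have := apply_append_le_of_isDiminishing hdim (hgreedy i hi)
      ((List.range (K - i)).map fun j => o (i + j)) (by simp; omega)
    rw [List.length_map, List.length_range, Nat.cast_sub hi.le] at this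
    rwa [List.range_succ, List.map_append, List.map_singleton]
  -- At `i = 0` the curvature bound degenerates to `0 ≤ 0`.
  have hcurv_i : (K : ℝ) * f G - (K * X - ((K : ℝ) - i) * f ((List.range K).map o)) ≤
      η * (((K : ℝ) - i) * f G) := by
    rcases Nat.eq_zero_or_pos i with rfl | hpos
    · simp [G, X, hf0]
    · exact hcurv i hpos (by omega)
  have hKi : (0 : ℝ) < K - i := sub_pos.mpr (by exact_mod_cast hi)
  have hext' := mul_le_mul_of_nonneg_left hext (Nat.cast_nonneg (α := ℝ) K)
  refine le_of_mul_le_mul_left ?_ hKi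
  linarith

end Strategies

theorem stmt3_general {α : Type*} (K : ℕ) (hK : 1 ≤ K)
    (f : List α → ℝ) (hf0 : f [] = 0) (g o : ℕ → α) (η : ℝ)
    (hη0 : 0 < η) (hη1 : η ≤ 1)
    -- G_K is a greedy strategy
    (hgreedy : ∀ i < K, ∀ a : α,
      f ((List.range i).map g ++ [g i]) ≥ f ((List.range i).map g ++ [a]))
    -- f is K-diminishing
    (hdim : ∀ M N : List α, M <+: N → N.length ≤ K - 1 → ∀ a : α,
      f (M ++ [a]) - f M ≥ f (N ++ [a]) - f N)
    -- the curvature of f is at most η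
    (hcurv : ∀ i : ℕ, 1 ≤ i → i ≤ K - 1 →
      (K : ℝ) * f ((List.range i).map g) -
          ((K : ℝ) * f ((List.range i).map g ++
              (List.range (K - i)).map (fun j => o (i + j))) -
            ((K : ℝ) - i) * f ((List.range K).map o)) ≤
        η * (((K : ℝ) - i) * f ((List.range i).map g))) :
    f ((List.range K).map g) ≥
      (1 / η) * (1 - (1 - η / (K : ℝ)) ^ K) * f ((List.range K).map o) := by
  have hK0 : (0 : ℝ) < K := by exact_mod_cast hK
  have hc : 0 ≤ 1 - η / K :=
    sub_nonneg.mpr <| (div_le_one hK0).mpr <| hη1.trans (by exact_mod_cast hK)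
  have hrec := mul_geom_sum_le_of_le_mul_add (x := fun i => f ((List.range i).map g))
    (b := f ((List.range K).map o) / K) (n := K) hc (by simp [hf0]) fun i hi => by
      have hgain := opt_sub_le_greedy_gain hf0 hgreedy hdim hcurv hi
      calc _ = f ((List.range i).map g) +
              (f ((List.range K).map o) - η * f ((List.range i).map g)) / K := by ring
        _ ≤ f ((List.range i).map g) +
              K * (f ((List.range (i + 1)).map g) - f ((List.range i).map g)) / K := by gcongr
        _ = f ((List.range (i + 1)).map g) := by rw [mul_div_cancel_left₀ _ hK0.ne']; ring
  rw [geom_sum_eq (by simp [hη0.ne', hK0.ne'])] at hrec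
  convert hrec.ge using 1
  field_simp [hη0.ne', hK0.ne']
  ring

/-- If `f` is K-submodular and K-GO-concave, and its curvature is at most
`η ∈ (0,1]`, then the greedy strategy satisfies
`f(G_K) ≥ (1/η)·(1 − (1 − η/K)^K)·f(O_K)`. -/
theorem stmt3 {α : Type*} [Nonempty α] (K : ℕ) (hK : 1 ≤ K)
    (f : List α → ℝ) (hf0 : f [] = 0) (g o : ℕ → α) (η : ℝ)
    (hη0 : 0 < η) (hη1 : η ≤ 1)
    -- O_K is an optimal strategy of length K
    (hopt : ∀ M : List α, M.length ≤ K → f ((List.range K).map o) ≥ f M)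
    -- G_K is a greedy strategy
    (hgreedy : ∀ i < K, ∀ a : α,
      f ((List.range i).map g ++ [g i]) ≥ f ((List.range i).map g ++ [a]))
    -- f is K-monotone
    (hmono : ∀ M N : List α, M.length + N.length ≤ K → f (M ++ N) ≥ f M)
    -- f is K-diminishing
    (hdim : ∀ M N : List α, M <+: N → N.length ≤ K - 1 → ∀ a : α,
      f (M ++ [a]) - f M ≥ f (N ++ [a]) - f N)
    -- f is K-GO-concave
    (hGO : ∀ i : ℕ, 1 ≤ i → i ≤ K - 1 →
      f ((List.range i).map g ++ (List.range (K - i)).map (fun j => o (i + j))) ≥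
        ((i : ℝ) / K) * f ((List.range i).map g) +
          (1 - (i : ℝ) / K) * f ((List.range K).map o))
    -- the curvature of f is at most η
    (hcurv : ∀ i : ℕ, 1 ≤ i → i ≤ K - 1 →
      (K : ℝ) * f ((List.range i).map g) -
          ((K : ℝ) * f ((List.range i).map g ++
              (List.range (K - i)).map (fun j => o (i + j))) -
            ((K : ℝ) - i) * f ((List.range K).map o)) ≤
        η * (((K : ℝ) - i) * f ((List.range i).map g))) :
    f ((List.range K).map g) ≥
      (1 / η) * (1 - (1 - η / (K : ℝ)) ^ K) * f ((List.range K).map o) :=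
  stmt3_general K hK f hf0 g o η hη0 hη1 hgreedy hdim hcurv
end

section
/- If f is K-diminishing and f(∅) = 0, then the first greedy action satisfies f(G_1) ≥ (1/K)·f(O_K), where G_1 = (g_1) and O_K is an optimal strategy of length K. -/
/-- If `f` is K-diminishing and `f(∅) = 0`, then the first greedy action
satisfies `f(G_1) ≥ (1/K)·f(O_K)`. -/
theorem stmt5 {α : Type*} [Nonempty α] (K : ℕ) (hK : 1 ≤ K)
    (f : List α → ℝ) (hf0 : f [] = 0) (g o : ℕ → α)
    -- O_K is an optimal strategy of length K
    (hopt : ∀ M : List α, M.length ≤ K → f ((List.range K).map o) ≥ f M)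
    -- G_K is a greedy strategy
    (hgreedy : ∀ i < K, ∀ a : α,
      f ((List.range i).map g ++ [g i]) ≥ f ((List.range i).map g ++ [a]))
    -- f is K-diminishing
    (hdim : ∀ M N : List α, M <+: N → N.length ≤ K - 1 → ∀ a : α,
      f (M ++ [a]) - f M ≥ f (N ++ [a]) - f N) :
    f [g 0] ≥ (1 / (K : ℝ)) * f ((List.range K).map o) := by
  have hg0 : ∀ a : α, f [g 0] ≥ f [a] := by
    intro a
    have := hgreedy 0 hK a
    simpa using this
  -- key: f (P n) ≤ n * f [g 0] for n ≤ K
  have key : ∀ n, n ≤ K → f ((List.range n).map o) ≤ n * f [g 0] := by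
    intro n
    induction n with
    | zero => intro _; simp [hf0]
    | succ n ih =>
      intro hn
      have hn' : n ≤ K := Nat.le_of_succ_le hn
      have hih := ih hn'
      have hpre : ([] : List α) <+: (List.range n).map o := List.nil_prefix
      have hlen : ((List.range n).map o).length ≤ K - 1 := by
        simp only [List.length_map, List.length_range]
        omega
      have hd := hdim [] ((List.range n).map o) hpre hlen (o n)
      have hstep : f ((List.range n).map o ++ [o n]) - f ((List.range n).map o)
          ≤ f [o n] := by
        have : f ([] ++ [o n]) - f [] = f [o n] := by simp [hf0]
        linarith [hd, this.ge]
      have heq : (List.range (n+1)).map o = (List.range n).map o ++ [o n] := by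
        rw [List.range_succ, List.map_append]; rfl
      rw [heq]
      have := hg0 (o n)
      push_cast
      linarith
  have hle : f ((List.range K).map o) ≤ K * f [g 0] := key K le_rfl
  have hKpos : (0:ℝ) < K := by exact_mod_cast hK
  rw [ge_iff_le, one_div, inv_mul_le_iff₀ hKpos]
  linarith
end

section
/- If f is K-diminishing, then for every 1 ≤ i ≤ K − 1 the greedy strategy satisfies f(G_{i+1}) − f(G_i) ≥ (1/(K − i))·(f(G_i ⊕ Ō_{K−i}) − f(G_i)). -/
/-- If `f` is K-diminishing, then for every `1 ≤ i ≤ K−1` the greedy strategy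
satisfies `f(G_{i+1}) − f(G_i) ≥ (1/(K−i))·(f(G_i ⊕ Ō_{K−i}) − f(G_i))`,
where `O_K = (o 0, …, o (K−1))` is an arbitrary string of length `K`. -/
theorem stmt6 {α : Type*} [Nonempty α] (K : ℕ) (hK : 2 ≤ K)
    (f : List α → ℝ) (g o : ℕ → α)
    -- G_K is a greedy strategy
    (hgreedy : ∀ i < K, ∀ a : α,
      f ((List.range i).map g ++ [g i]) ≥ f ((List.range i).map g ++ [a]))
    -- f is K-diminishing
    (hdim : ∀ M N : List α, M <+: N → N.length ≤ K - 1 → ∀ a : α,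
      f (M ++ [a]) - f M ≥ f (N ++ [a]) - f N) :
    ∀ i : ℕ, 1 ≤ i → i ≤ K - 1 →
      f ((List.range (i + 1)).map g) - f ((List.range i).map g) ≥
        (1 / ((K : ℝ) - i)) *
          (f ((List.range i).map g ++ (List.range (K - i)).map (fun j => o (i + j))) -
            f ((List.range i).map g)) := by
  intro i hi1 hiK
  have hiK' : i < K := lt_of_le_of_lt hiK (Nat.sub_lt (by omega) one_pos)
  set L : List α := (List.range i).map g with hL
  set D : ℝ := f ((List.range (i + 1)).map g) - f L with hD
  set S : ℕ → List α := fun j => L ++ (List.range j).map (fun t => o (i + t)) with hS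
  have hG : (List.range (i + 1)).map g = L ++ [g i] := by
    rw [List.range_succ, List.map_append, List.map_singleton]
  have hSsucc : ∀ j, S (j + 1) = S j ++ [o (i + j)] := by
    intro j
    simp only [hS, List.range_succ, List.map_append, List.map_singleton, List.append_assoc]
  have hLlen : L.length = i := by simp [hL]
  have key : ∀ j, j ≤ K - i → f (S j) - f L ≤ j * D := by
    intro j
    induction j with
    | zero => intro _; simp [hS]
    | succ j ih =>
      intro hj
      have hj' : j ≤ K - i := by omega
      have hSlen : (S j).length ≤ K - 1 := by
        simp [hS, hLlen]; omega
      have hpre : L <+: S j := ⟨_, rfl⟩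
      have h1 := hdim L (S j) hpre hSlen (o (i + j))
      have h2 := hgreedy i hiK' (o (i + j))
      have h3 : f (L ++ [o (i + j)]) - f L ≤ D := by
        rw [hD, hG]; linarith
      have := ih hj'
      rw [hSsucc]
      push_cast
      nlinarith [h1, h3, this]
  have hm := key (K - i) le_rfl
  have hKi : ((K : ℝ) - i) = ((K - i : ℕ) : ℝ) := by
    push_cast [Nat.cast_sub hiK'.le]; ring
  have hpos : (0 : ℝ) < (K : ℝ) - i := by
    rw [hKi]; exact_mod_cast Nat.sub_pos_of_lt hiK'
  rw [ge_iff_le, one_div, inv_mul_le_iff₀ hpos]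
  have : f (S (K - i)) - f L ≤ ((K : ℝ) - i) * D := by
    rw [hKi]; exact hm
  simpa [hS, hD] using this
end

section
/- If f is K-diminishing and K-GO-concave, then for every 1 ≤ i ≤ K − 1 the greedy strategy satisfies f(G_{i+1}) ≥ (1/K)·f(O_K) + (1 − 1/K)·f(G_i). -/
lemma tele_aux {α : Type*} (f : List α → ℝ) (K : ℕ) (A : List α)
    (hdim : ∀ M N : List α, M <+: N → N.length ≤ K - 1 → ∀ a : α,
      f (M ++ [a]) - f M ≥ f (N ++ [a]) - f N) (c : ℝ) :
    ∀ L : List α, A.length + L.length ≤ K →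
      (∀ a : α, f (A ++ [a]) - f A ≤ c) → f (A ++ L) - f A ≤ L.length * c := by
  intro L
  induction L using List.reverseRecOn with
  | nil => simp
  | append_singleton L' a ih =>
    intro hlen hall
    simp only [List.length_append, List.length_singleton] at hlen ⊢
    have hlen' : A.length + L'.length ≤ K - 1 := by omega
    have h1 := hdim A (A ++ L') (List.prefix_append _ _)
      (by simp only [List.length_append]; omega) a
    have h2 := ih (by omega) hall
    have h3 := hall a
    rw [← List.append_assoc]
    push_cast
    nlinarith [h1, h2, h3]

/-- If `f` is K-diminishing and K-GO-concave, then for every `1 ≤ i ≤ K−1`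
the greedy strategy satisfies `f(G_{i+1}) ≥ (1/K)·f(O_K) + (1 − 1/K)·f(G_i)`. -/
theorem stmt7 {α : Type*} [Nonempty α] (K : ℕ) (hK : 2 ≤ K)
    (f : List α → ℝ) (g o : ℕ → α)
    -- O_K is an optimal strategy of length K
    (hopt : ∀ M : List α, M.length ≤ K → f ((List.range K).map o) ≥ f M)
    -- G_K is a greedy strategy
    (hgreedy : ∀ i < K, ∀ a : α,
      f ((List.range i).map g ++ [g i]) ≥ f ((List.range i).map g ++ [a]))
    -- f is K-diminishing
    (hdim : ∀ M N : List α, M <+: N → N.length ≤ K - 1 → ∀ a : α,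
      f (M ++ [a]) - f M ≥ f (N ++ [a]) - f N)
    -- f is K-GO-concave
    (hGO : ∀ i : ℕ, 1 ≤ i → i ≤ K - 1 →
      f ((List.range i).map g ++ (List.range (K - i)).map (fun j => o (i + j))) ≥
        ((i : ℝ) / K) * f ((List.range i).map g) +
          (1 - (i : ℝ) / K) * f ((List.range K).map o)) :
    ∀ i : ℕ, 1 ≤ i → i ≤ K - 1 →
      f ((List.range (i + 1)).map g) ≥
        (1 / (K : ℝ)) * f ((List.range K).map o) +
          (1 - 1 / (K : ℝ)) * f ((List.range i).map g) := by
  intro i hi1 hi2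
  have hiK : i < K := by omega
  set A : List α := (List.range i).map g with hA
  set L : List α := (List.range (K - i)).map (fun j => o (i + j)) with hL
  have hGsucc : (List.range (i + 1)).map g = A ++ [g i] := by
    simp [hA, List.range_succ]
  set c : ℝ := f (A ++ [g i]) - f A with hc
  have hall : ∀ a : α, f (A ++ [a]) - f A ≤ c := by
    intro a
    have := hgreedy i hiK a
    simp only [hc]
    linarith
  have hlenA : A.length = i := by simp [hA]
  have hlenL : L.length = K - i := by simp [hL]
  have htel := tele_aux f K A hdim c L (by omega) hall
  have hgo := hGO i hi1 hi2
  rw [hGsucc]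
  have hm1 : 1 ≤ K - i := by omega
  have hm0 : (0 : ℝ) < ((K - i : ℕ) : ℝ) := by exact_mod_cast hm1
  have hK0 : (0 : ℝ) < (K : ℝ) := by positivity
  have hiM : (i : ℝ) = (K : ℝ) - ((K - i : ℕ) : ℝ) := by
    have h : ((i + (K - i) : ℕ) : ℝ) = (K : ℝ) := by norm_cast; omega
    push_cast at h; linarith
  rw [hlenL] at htel
  set fA := f A
  set fO := f ((List.range K).map o)
  set fAL := f (A ++ L)
  clear_value A L c fA fO fAL
  have e1 : ((i : ℝ) / K) * fA + (1 - (i : ℝ) / K) * fO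
      = fA + (((K - i : ℕ) : ℝ) / K) * (fO - fA) := by
    rw [hiM]; field_simp; ring
  have h3 : ((K - i : ℕ) : ℝ) * c ≥ ((K - i : ℕ) : ℝ) * ((1 / K) * (fO - fA)) := by
    have : ((K - i : ℕ) : ℝ) * ((1 / K) * (fO - fA))
        = (((K - i : ℕ) : ℝ) / K) * (fO - fA) := by ring
    rw [this]
    rw [e1] at hgo
    linarith [htel, hgo]
  have h4 : c ≥ (1 / (K : ℝ)) * (fO - fA) :=
    le_of_mul_le_mul_left h3 hm0
  have hc' : f (A ++ [g i]) = fA + c := by rw [hc]; ring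
  rw [hc']
  have : (1 / (K : ℝ)) * fO + (1 - 1 / (K : ℝ)) * fA
      = fA + (1 / (K : ℝ)) * (fO - fA) := by ring
  rw [this]
  linarith
end

section
/- Suppose f is K-diminishing and η ∈ (0, 1] satisfies, for every 1 ≤ i ≤ K − 1, f(G_i ⊕ Ō_{K−i}) − f(G_i) ≥ ((K − i)/K)·(f(O_K) − η·f(G_i)). Then for every 1 ≤ i ≤ K − 1 the greedy strategy satisfies f(G_{i+1}) ≥ (1/K)·f(O_K) + (1 − η/K)·f(G_i). -/
/-- If `f` is K-diminishing and `η ∈ (0,1]` satisfies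
`f(G_i ⊕ Ō_{K−i}) − f(G_i) ≥ ((K−i)/K)·(f(O_K) − η·f(G_i))` for `1 ≤ i ≤ K−1`,
then `f(G_{i+1}) ≥ (1/K)·f(O_K) + (1 − η/K)·f(G_i)` for `1 ≤ i ≤ K−1`,
where `O_K = (o 0, …, o (K−1))` is an arbitrary string of length `K`. -/
theorem stmt8 {α : Type*} [Nonempty α] (K : ℕ) (hK : 2 ≤ K)
    (f : List α → ℝ) (g o : ℕ → α) (η : ℝ) (hη0 : 0 < η) (hη1 : η ≤ 1)
    -- G_K is a greedy strategy
    (hgreedy : ∀ i < K, ∀ a : α,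
      f ((List.range i).map g ++ [g i]) ≥ f ((List.range i).map g ++ [a]))
    -- f is K-diminishing
    (hdim : ∀ M N : List α, M <+: N → N.length ≤ K - 1 → ∀ a : α,
      f (M ++ [a]) - f M ≥ f (N ++ [a]) - f N)
    -- curvature-type hypothesis involving η
    (hcurv : ∀ i : ℕ, 1 ≤ i → i ≤ K - 1 →
      f ((List.range i).map g ++ (List.range (K - i)).map (fun j => o (i + j))) -
          f ((List.range i).map g) ≥
        (((K : ℝ) - i) / K) *
          (f ((List.range K).map o) - η * f ((List.range i).map g))) :
    ∀ i : ℕ, 1 ≤ i → i ≤ K - 1 →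
      f ((List.range (i + 1)).map g) ≥
        (1 / (K : ℝ)) * f ((List.range K).map o) +
          (1 - η / (K : ℝ)) * f ((List.range i).map g) := by
  intro i hi1 hiK
  have hiK' : i < K := by omega
  have hsucc : (List.range (i+1)).map g = (List.range i).map g ++ [g i] := by
    simp [List.range_succ]
  have key : ∀ n, n ≤ K - i →
      f ((List.range i).map g ++ (List.range n).map (fun j => o (i + j))) ≤
        f ((List.range i).map g) +
          n * (f ((List.range (i+1)).map g) - f ((List.range i).map g)) := by
    intro n
    induction n with
    | zero => intro _; simp
    | succ n ih =>
      intro hn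
      have h1 := ih (by omega)
      have hpre : (List.range i).map g <+:
          (List.range i).map g ++ (List.range n).map (fun j => o (i + j)) :=
        List.prefix_append _ _
      have hlen : ((List.range i).map g ++
          (List.range n).map (fun j => o (i + j))).length ≤ K - 1 := by
        simp; omega
      have h2 := hdim _ _ hpre hlen (o (i + n))
      have h3 := hgreedy i hiK' (o (i + n))
      have heq : (List.range (n+1)).map (fun j => o (i + j)) =
          (List.range n).map (fun j => o (i + j)) ++ [o (i + n)] := by
        simp [List.range_succ]
      rw [heq, ← List.append_assoc, hsucc]
      rw [hsucc] at h1
      push_cast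
      nlinarith [h1, h2, h3]
  have hmain := key (K - i) le_rfl
  have hc := hcurv i hi1 hiK
  have hK0 : (0 : ℝ) < K := by positivity
  have hpos : (0 : ℝ) < (K : ℝ) - i := by
    have : (i : ℝ) < K := by exact_mod_cast hiK'
    linarith
  have hcast : ((K - i : ℕ) : ℝ) = (K : ℝ) - i := by
    push_cast [Nat.cast_sub hiK'.le]; ring
  rw [hcast] at hmain
  set Gi := f ((List.range i).map g)
  set Gi1 := f ((List.range (i+1)).map g)
  set O := f ((List.range K).map o)
  -- from hmain and hc: ((K:ℝ)-i)*(Gi1 - Gi) ≥ ((K-i)/K)*(O - η*Gi)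
  have hd : Gi1 - Gi ≥ (O - η * Gi) / K := by
    rw [ge_iff_le, div_le_iff₀ hK0]
    have h4 : ((K : ℝ) - i) * (Gi1 - Gi) ≥ (((K : ℝ) - i) / K) * (O - η * Gi) := by
      linarith
    rw [div_mul_eq_mul_div, ge_iff_le, div_le_iff₀ hK0] at h4
    nlinarith [h4, hpos]
  rw [ge_iff_le]
  have : (1 / (K : ℝ)) * O + (1 - η / K) * Gi = Gi + (O - η * Gi) / K := by
    field_simp; ring
  rw [this]
  linarith
end

section
/- Let K ≥ 1 be an integer, η ∈ (0, 1], V ∈ ℝ, and x_1, …, x_K ∈ ℝ a finite sequence such that x_1 ≥ V/K and x_{i+1} ≥ (1/K)·V + (1 − η/K)·x_i for all 1 ≤ i ≤ K − 1. Then x_K ≥ (1/η)·(1 − (1 − η/K)^K)·V. -/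
/-- Recursion lemma with curvature: if `η ∈ (0,1]`, `x 1 ≥ V/K` and
`x (i+1) ≥ V/K + (1 − η/K)·x i` for `1 ≤ i ≤ K−1`, then
`x K ≥ (1/η)·(1 − (1 − η/K)^K)·V`. -/
theorem stmt10 (K : ℕ) (hK : 1 ≤ K) (η V : ℝ) (hη0 : 0 < η) (hη1 : η ≤ 1)
    (x : ℕ → ℝ)
    (h1 : x 1 ≥ V / K)
    (hrec : ∀ i : ℕ, 1 ≤ i → i ≤ K - 1 →
      x (i + 1) ≥ (1 / (K : ℝ)) * V + (1 - η / (K : ℝ)) * x i) :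
    x K ≥ (1 / η) * (1 - (1 - η / (K : ℝ)) ^ K) * V := by
  have hKpos : (0:ℝ) < K := by exact_mod_cast hK
  set r : ℝ := 1 - η / K with hr
  have hηK : η / K ≤ 1 := by
    rw [div_le_one hKpos]
    calc η ≤ 1 := hη1
    _ ≤ K := by exact_mod_cast hK
  have hr0 : 0 ≤ r := by simp [hr]; linarith
  have key : ∀ i : ℕ, 1 ≤ i → i ≤ K →
      x i ≥ (V / K) * ∑ j ∈ Finset.range i, r ^ j := by
    intro i
    induction i with
    | zero => intro h; omega
    | succ n ih =>
      intro _ hle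
      rcases Nat.eq_or_lt_of_le (Nat.one_le_iff_ne_zero.mpr (by omega) : 1 ≤ n + 1) with h | h
      · simp [← h]; simpa using h1
      · have hn1 : 1 ≤ n := by omega
        have hnK : n ≤ K - 1 := by omega
        have hx := hrec n hn1 hnK
        have hxn := ih hn1 (by omega)
        have : r * x n ≥ r * ((V / K) * ∑ j ∈ Finset.range n, r ^ j) :=
          mul_le_mul_of_nonneg_left hxn hr0
        have hsum : ∑ j ∈ Finset.range (n + 1), r ^ j
            = r * ∑ j ∈ Finset.range n, r ^ j + 1 := geom_sum_succ
        calc x (n + 1) ≥ (1 / (K:ℝ)) * V + r * x n := hx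
        _ ≥ (1 / (K:ℝ)) * V + r * ((V / K) * ∑ j ∈ Finset.range n, r ^ j) := by linarith
        _ = (V / K) * ∑ j ∈ Finset.range (n + 1), r ^ j := by rw [hsum]; ring
  have hfin := key K hK le_rfl
  have hr1 : r ≠ 1 := by
    intro h
    have : η / K = 0 := by rw [hr] at h; linarith
    exact absurd this (ne_of_gt (div_pos hη0 hKpos))
  rw [geom_sum_eq hr1] at hfin
  have heq : (V / K) * ((r ^ K - 1) / (r - 1)) = (1 / η) * (1 - r ^ K) * V := by
    have : r - 1 = -(η / K) := by rw [hr]; ring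
    rw [this]
    field_simp
    ring
  rw [heq] at hfin
  exact hfin
end

section
/- Let 0 < L̂ ≤ Û < 1 with L̂ ≥ (1 − L̂)·Û, and let p : 𝔸 × {1, 2, …} → ℝ satisfy L̂ ≤ p^j(a) ≤ Û for all a ∈ 𝔸 and all stages j. Then the task-assignment objective f((a_1, …, a_k)) = 1 − ∏_{j=1}^k (1 − p^j(a_j)) is K-diminishing for every integer K ≥ 1. -/
/-!
Appending `a` to a strategy `M` raises the success probability by the probability that `M`
fails times `p a (|M| + 1)`. For `N = M ++ T` with `T` nonempty, the failure probability of `T`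
is at most `1 - L̂`, so the gain at `N` is at most `P(M) · (1 - L̂) · Û ≤ P(M) · L̂`, which is at
most the gain at `M`.
-/

namespace TaskAssignment

variable {α : Type*} (p : α → ℕ → ℝ)

/-- The probability that every action of `l` fails, its first action being taken at stage
`s + 1`. -/
def failureProb (s : ℕ) (l : List α) : ℝ :=
  ((l.zipIdx s).map fun ja => 1 - p ja.1 (ja.2 + 1)).prod

@[simp]
lemma failureProb_nil (s : ℕ) : failureProb p s [] = 1 := rfl

@[simp]
lemma failureProb_cons (s : ℕ) (b : α) (l : List α) :
    failureProb p s (b :: l) = (1 - p b (s + 1)) * failureProb p (s + 1) l := by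
  simp [failureProb]

lemma failureProb_append (s : ℕ) (M T : List α) :
    failureProb p s (M ++ T) = failureProb p s M * failureProb p (s + M.length) T := by
  simp only [failureProb, List.zipIdx_append, List.map_append, List.prod_append]

variable {p}

lemma failureProb_nonneg (hp : ∀ a j, 1 ≤ j → p a j ≤ 1) (s : ℕ) (l : List α) :
    0 ≤ failureProb p s l :=
  List.prod_nonneg fun x hx => by
    obtain ⟨ja, -, rfl⟩ := List.mem_map.1 hx
    linarith [hp ja.1 (ja.2 + 1) (Nat.le_add_left 1 _)]

lemma failureProb_le_one (hp : ∀ a j, 1 ≤ j → 0 ≤ p a j ∧ p a j ≤ 1) (s : ℕ) (l : List α) :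
    failureProb p s l ≤ 1 := by
  have hle := List.prod_map_le_prod_map₀ (s := l.zipIdx s) (fun ja => 1 - p ja.1 (ja.2 + 1))
    (fun _ => 1) (fun ja _ => by linarith [hp ja.1 (ja.2 + 1) (Nat.le_add_left 1 _)])
    (fun ja _ => by linarith [hp ja.1 (ja.2 + 1) (Nat.le_add_left 1 _)])
  simpa [failureProb] using hle

lemma failureProb_cons_le {L : ℝ} (hL : 0 ≤ L) (hp : ∀ a j, 1 ≤ j → L ≤ p a j ∧ p a j ≤ 1)
    (s : ℕ) (b : α) (l : List α) : failureProb p s (b :: l) ≤ 1 - L := by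
  have hb := hp b (s + 1) (Nat.le_add_left 1 s)
  rw [failureProb_cons, ← mul_one (1 - L)]
  exact mul_le_mul (by linarith) (failureProb_le_one (fun a j hj => ⟨hL.trans (hp a j hj).1,
    (hp a j hj).2⟩) _ _) (failureProb_nonneg (fun a j hj => (hp a j hj).2) _ _) (by linarith)

lemma failureProb_append_mul_le {L U : ℝ} (hL : 0 ≤ L) (hU : U < 1) (hLU : (1 - L) * U ≤ L)
    (hp : ∀ a j, 1 ≤ j → L ≤ p a j ∧ p a j ≤ U) (s : ℕ) (M T : List α) (a : α) :
    failureProb p s (M ++ T) * p a (s + (M ++ T).length + 1) ≤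
      failureProb p s M * p a (s + M.length + 1) := by
  have hp1 : ∀ a j, 1 ≤ j → L ≤ p a j ∧ p a j ≤ 1 := fun a j hj =>
    ⟨(hp a j hj).1, (hp a j hj).2.trans hU.le⟩
  rw [failureProb_append, mul_assoc]
  refine mul_le_mul_of_nonneg_left ?_ (failureProb_nonneg (fun a j hj => (hp1 a j hj).2) _ _)
  rcases T with _ | ⟨b, T⟩
  · simp
  · have hN := hp a (s + (M ++ b :: T).length + 1) (Nat.le_add_left 1 _)
    have hM := hp a (s + M.length + 1) (Nat.le_add_left 1 _)
    calc failureProb p (s + M.length) (b :: T) * p a (s + (M ++ b :: T).length + 1)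
        ≤ (1 - L) * U :=
          mul_le_mul (failureProb_cons_le hL hp1 _ _ _) hN.2 (hL.trans hN.1) (by linarith)
      _ ≤ p a (s + M.length + 1) := hLU.trans hM.1

lemma sub_eq_failureProb_mul {f : List α → ℝ} (hf : ∀ M, f M = 1 - failureProb p 0 M)
    (M : List α) (a : α) : f (M ++ [a]) - f M = failureProb p 0 M * p a (M.length + 1) := by
  rw [hf, hf, failureProb_append, failureProb_cons, failureProb_nil, zero_add]
  ring

end TaskAssignment

open TaskAssignment in
theorem stmt15_general {α : Type*} (Lhat Uhat : ℝ)
    (hL : 0 < Lhat) (hU : Uhat < 1)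
    (hcond : Lhat ≥ (1 - Lhat) * Uhat)
    (p : α → ℕ → ℝ)
    (hp : ∀ (a : α) (j : ℕ), 1 ≤ j → Lhat ≤ p a j ∧ p a j ≤ Uhat)
    (f : List α → ℝ)
    (hf : ∀ M : List α, f M = 1 - (M.zipIdx.map (fun ja => 1 - p ja.1 (ja.2 + 1))).prod) :
    ∀ K : ℕ, 1 ≤ K →
      ∀ M N : List α, M <+: N → N.length ≤ K - 1 → ∀ a : α,
        f (M ++ [a]) - f M ≥ f (N ++ [a]) - f N := by
  rintro - - M N ⟨T, rfl⟩ - a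
  rw [ge_iff_le, sub_eq_failureProb_mul hf, sub_eq_failureProb_mul hf]
  simpa using failureProb_append_mul_le hL.le hU hcond hp 0 M T a

/-- Task-assignment objective: if `0 < L̂ ≤ Û < 1`, `L̂ ≥ (1 − L̂)·Û`, and the
success probabilities satisfy `L̂ ≤ p a j ≤ Û` for all actions `a` and stages
`j ≥ 1`, then `f((a_1,…,a_k)) = 1 − ∏_{j=1}^k (1 − p^j(a_j))` is K-diminishing
for every `K ≥ 1`.  The element at (0-based) list index `i` is at stage `i+1`. -/
theorem stmt15 {α : Type*} [Nonempty α] (Lhat Uhat : ℝ)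
    (hL : 0 < Lhat) (hLU : Lhat ≤ Uhat) (hU : Uhat < 1)
    (hcond : Lhat ≥ (1 - Lhat) * Uhat)
    (p : α → ℕ → ℝ)
    (hp : ∀ (a : α) (j : ℕ), 1 ≤ j → Lhat ≤ p a j ∧ p a j ≤ Uhat)
    (f : List α → ℝ)
    (hf : ∀ M : List α, f M = 1 - (M.zipIdx.map (fun ja => 1 - p ja.1 (ja.2 + 1))).prod) :
    ∀ K : ℕ, 1 ≤ K →
      ∀ M N : List α, M <+: N → N.length ≤ K - 1 → ∀ a : α,
        f (M ++ [a]) - f M ≥ f (N ++ [a]) - f N :=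
  stmt15_general Lhat Uhat hL hU hcond p hp f hf
end

section
/- Let f((a_1, …, a_k)) = 1 − ∏_{j=1}^k (1 − p^j(a_j)) with 0 < p^j(a) < 1 for all a ∈ 𝔸 and all j. Let O_K = (o_1, …, o_K) be an optimal strategy and G_K = (g_1, …, g_K) a greedy strategy for f over horizon K. If ∏_{j=i+1}^K (1 − p^j(o_j)) ≤ i/K for every 1 ≤ i ≤ K − 1, then f is K-GO-concave, i.e., f(G_i ⊕ Ō_{K−i}) ≥ (i/K)·f(G_i) + (1 − i/K)·f(O_K) for all 1 ≤ i ≤ K − 1. -/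
/-!
Writing `P` for the failure product of `G_i`, and `Q₁ Q₂` for the failure products of the
first `i` and the last `K - i` actions of `O_K`, the three values are `f(G_i) = 1 - P`,
`f(O_K) = 1 - Q₁ Q₂` and `f(G_i ⊕ Ō_{K-i}) = 1 - P Q₂`. The hypothesis is `Q₂ ≤ i/K`, so
`P Q₂ ≤ (i/K) P ≤ (i/K) P + (1 - i/K) Q₁ Q₂`, which is the claim.
-/

open Finset

theorem List.prod_map_zipIdx_map_range {M α : Type*} [CommMonoid M] (c : α → ℕ → M)
    (h : ℕ → α) (n s : ℕ) :
    ((((List.range n).map h).zipIdx s).map fun ja => c ja.1 ja.2).prod =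
      ∏ j ∈ Finset.range n, c (h j) (s + j) := by
  induction n with
  | zero => simp
  | succ n ih =>
    rw [List.range_succ, List.map_append, List.zipIdx_append, List.map_append,
      List.prod_append, ih, Finset.prod_range_succ]
    simp

theorem Finset.prod_Icc_succ_eq_prod_range {M : Type*} [CommMonoid M] (F : ℕ → M) (i K : ℕ) :
    ∏ j ∈ Icc (i + 1) K, F j = ∏ j ∈ range (K - i), F (i + j + 1) := by
  rw [← Finset.Ico_add_one_right_eq_Icc, prod_Ico_eq_prod_range]
  refine prod_congr (by congr 1; omega) fun j _ => ?_
  congr 1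
  omega

theorem convex_comb_le_one_sub_mul {P Q R t : ℝ} (hP : 0 ≤ P) (hQ : 0 ≤ Q) (hR : R ≤ t)
    (ht : t ≤ 1) : t * (1 - P) + (1 - t) * (1 - Q) ≤ 1 - P * R := by
  nlinarith [mul_le_mul_of_nonneg_left hR hP, mul_nonneg (sub_nonneg.2 ht) hQ]

section Objective

variable {α : Type*} (p : α → ℕ → ℝ) {f : List α → ℝ}

theorem objective_map_range
    (hf : ∀ M : List α, f M = 1 - (M.zipIdx.map (fun ja => 1 - p ja.1 (ja.2 + 1))).prod)
    (h : ℕ → α) (n : ℕ) :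
    f ((List.range n).map h) = 1 - ∏ j ∈ range n, (1 - p (h j) (j + 1)) := by
  rw [hf, List.prod_map_zipIdx_map_range (fun a k => 1 - p a (k + 1))]
  simp

theorem objective_map_range_append
    (hf : ∀ M : List α, f M = 1 - (M.zipIdx.map (fun ja => 1 - p ja.1 (ja.2 + 1))).prod)
    (g h : ℕ → α) (i n : ℕ) :
    f ((List.range i).map g ++ (List.range n).map h) =
      1 - (∏ j ∈ range i, (1 - p (g j) (j + 1))) * ∏ j ∈ range n, (1 - p (h j) (i + j + 1)) := by
  rw [hf, List.zipIdx_append, List.map_append, List.prod_append,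
    List.prod_map_zipIdx_map_range (fun a k => 1 - p a (k + 1)), List.length_map,
    List.length_range, List.prod_map_zipIdx_map_range (fun a k => 1 - p a (k + 1))]
  simp

end Objective

theorem failure_prod_nonneg {α : Type*} {p : α → ℕ → ℝ} (hp : ∀ a j, 1 ≤ j → p a j ≤ 1)
    (h : ℕ → α) (s : Finset ℕ) (m : ℕ) : 0 ≤ ∏ j ∈ s, (1 - p (h j) (m + j + 1)) :=
  prod_nonneg fun j _ => sub_nonneg.2 (hp _ _ (by omega))

theorem stmt17_general {α : Type*} (K : ℕ)
    (p : α → ℕ → ℝ)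
    (hp : ∀ (a : α) (j : ℕ), 1 ≤ j → 0 < p a j ∧ p a j < 1)
    (f : List α → ℝ)
    (hf : ∀ M : List α, f M = 1 - (M.zipIdx.map (fun ja => 1 - p ja.1 (ja.2 + 1))).prod)
    (g o : ℕ → α)
    -- product-of-failure-probabilities condition
    (hprod : ∀ i : ℕ, 1 ≤ i → i ≤ K - 1 →
      ∏ j ∈ Finset.Icc (i + 1) K, (1 - p (o (j - 1)) j) ≤ (i : ℝ) / K) :
    -- f is K-GO-concave
    ∀ i : ℕ, 1 ≤ i → i ≤ K - 1 →
      f ((List.range i).map g ++ (List.range (K - i)).map (fun j => o (i + j))) ≥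
        ((i : ℝ) / K) * f ((List.range i).map g) +
          (1 - (i : ℝ) / K) * f ((List.range K).map o) := by
  intro i hi hiK
  have hp' : ∀ a j, 1 ≤ j → p a j ≤ 1 := fun a j hj => (hp a j hj).2.le
  have hiK' : i ≤ K := hiK.trans (K.sub_le 1)
  have hsplit : ∏ j ∈ range K, (1 - p (o j) (j + 1)) =
      (∏ j ∈ range i, (1 - p (o j) (j + 1))) *
        ∏ j ∈ range (K - i), (1 - p (o (i + j)) (i + j + 1)) := by
    rw [← prod_range_add (fun j => 1 - p (o j) (j + 1)), Nat.add_sub_cancel' hiK']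
  have htail : ∏ j ∈ range (K - i), (1 - p (o (i + j)) (i + j + 1)) ≤ (i : ℝ) / K := by
    simpa [prod_Icc_succ_eq_prod_range] using hprod i hi hiK
  rw [objective_map_range_append p hf, objective_map_range p hf, objective_map_range p hf,
    hsplit, ge_iff_le]
  exact convex_comb_le_one_sub_mul (by simpa using failure_prod_nonneg hp' g _ 0)
    (mul_nonneg (by simpa using failure_prod_nonneg hp' o _ 0) (failure_prod_nonneg hp' _ _ i))
    htail (div_le_one_of_le₀ (by exact_mod_cast hiK') (Nat.cast_nonneg K))

/-- Task-assignment objective `f((a_1,…,a_k)) = 1 − ∏_{j=1}^k (1 − p^j(a_j))`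
with `0 < p^j(a) < 1`: if `∏_{j=i+1}^K (1 − p^j(o_j)) ≤ i/K` for every
`1 ≤ i ≤ K − 1`, then `f` is K-GO-concave.  Strategies are indexed 0-based:
`G_i = (g 0, …, g (i−1))`, `O_K = (o 0, …, o (K−1))`, so the action at
(1-based) stage `j` of the optimal strategy is `o (j−1)`. -/
theorem stmt17 {α : Type*} [Nonempty α] (K : ℕ) (hK : 1 ≤ K)
    (p : α → ℕ → ℝ)
    (hp : ∀ (a : α) (j : ℕ), 1 ≤ j → 0 < p a j ∧ p a j < 1)
    (f : List α → ℝ)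
    (hf : ∀ M : List α, f M = 1 - (M.zipIdx.map (fun ja => 1 - p ja.1 (ja.2 + 1))).prod)
    (g o : ℕ → α)
    -- O_K is an optimal strategy of length K
    (hopt : ∀ M : List α, M.length ≤ K → f ((List.range K).map o) ≥ f M)
    -- G_K is a greedy strategy
    (hgreedy : ∀ i < K, ∀ a : α,
      f ((List.range i).map g ++ [g i]) ≥ f ((List.range i).map g ++ [a]))
    -- product-of-failure-probabilities condition
    (hprod : ∀ i : ℕ, 1 ≤ i → i ≤ K - 1 →
      ∏ j ∈ Finset.Icc (i + 1) K, (1 - p (o (j - 1)) j) ≤ (i : ℝ) / K) :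
    -- f is K-GO-concave
    ∀ i : ℕ, 1 ≤ i → i ≤ K - 1 →
      f ((List.range i).map g ++ (List.range (K - i)).map (fun j => o (i + j))) ≥
        ((i : ℝ) / K) * f ((List.range i).map g) +
          (1 - (i : ℝ) / K) * f ((List.range K).map o) :=
  stmt17_general K p hp f hf g o hprod
end

section
/- Let K ≥ 2 be an integer, σ_1, …, σ_K > 0 real numbers, and e_1, e_1^* ∈ [1/2, 1], e_2^*, …, e_K^* ∈ [1/2, 1]. Suppose (e_1 − e_1^*)·(1 − (e_1 + e_1^*)) ≥ 0 and (e_1 − e_1^*)·∑_{j=2}^K (1/σ_j²)·(2e_j^* − 1) ≥ (1/σ_1²)·(e_1 − e_1^*)·(1 − (e_1 + e_1^*)). Then e_1 = e_1^*. -/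
/-- Adaptive measurement design lemma: with `σ_j > 0`, `e_1, e_1^* ∈ [1/2,1]`,
`e_j^* ∈ [1/2,1]` for `2 ≤ j ≤ K`, if
`(e_1 − e_1^*)·(1 − (e_1 + e_1^*)) ≥ 0` and
`(e_1 − e_1^*)·∑_{j=2}^K (1/σ_j²)·(2e_j^* − 1) ≥ (1/σ_1²)·(e_1 − e_1^*)·(1 − (e_1 + e_1^*))`,
then `e_1 = e_1^*`. -/
theorem stmt18 (K : ℕ) (hK : 2 ≤ K) (σ : ℕ → ℝ)
    (hσ : ∀ j : ℕ, 1 ≤ j → j ≤ K → 0 < σ j)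
    (e1 e1s : ℝ) (es : ℕ → ℝ)
    (he1 : 1 / 2 ≤ e1 ∧ e1 ≤ 1) (he1s : 1 / 2 ≤ e1s ∧ e1s ≤ 1)
    (hes : ∀ j : ℕ, 2 ≤ j → j ≤ K → 1 / 2 ≤ es j ∧ es j ≤ 1)
    (h1 : (e1 - e1s) * (1 - (e1 + e1s)) ≥ 0)
    (h2 : (e1 - e1s) * ∑ j ∈ Finset.Icc 2 K, (1 / (σ j) ^ 2) * (2 * es j - 1) ≥
      (1 / (σ 1) ^ 2) * (e1 - e1s) * (1 - (e1 + e1s))) :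
    e1 = e1s := by
  have hS : 0 ≤ ∑ j ∈ Finset.Icc 2 K, (1 / (σ j) ^ 2) * (2 * es j - 1) := by
    apply Finset.sum_nonneg
    intro j hj
    rw [Finset.mem_Icc] at hj
    have h2j := hes j hj.1 hj.2
    have hpos := hσ j (le_trans one_le_two hj.1) hj.2
    have : (0:ℝ) ≤ 1 / (σ j) ^ 2 := by positivity
    have : (0:ℝ) ≤ 2 * es j - 1 := by linarith [h2j.1]
    exact mul_nonneg ‹_› ‹_›
  have hσ1 : 0 < 1 / (σ 1) ^ 2 := by
    have := hσ 1 le_rfl (le_trans one_le_two hK)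
    positivity
  have ht : 1 - (e1 + e1s) ≤ 0 := by linarith [he1.1, he1s.1]
  -- from h1 and ht: (e1 - e1s) * (1 - (e1+e1s)) = 0 or sign analysis
  rcases lt_trichotomy e1 e1s with h | h | h
  · -- e1 < e1s, d < 0: d * S ≤ 0, so RHS ≤ 0, but RHS ≥ 0 scaled... force t = 0
    have hdS : (e1 - e1s) * ∑ j ∈ Finset.Icc 2 K, (1 / (σ j) ^ 2) * (2 * es j - 1) ≤ 0 :=
      mul_nonpos_of_nonpos_of_nonneg (by linarith) hS
    have hrhs : (1 / (σ 1) ^ 2) * ((e1 - e1s) * (1 - (e1 + e1s))) ≤ 0 := by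
      calc (1 / (σ 1) ^ 2) * ((e1 - e1s) * (1 - (e1 + e1s)))
          = (1 / (σ 1) ^ 2) * (e1 - e1s) * (1 - (e1 + e1s)) := by ring
        _ ≤ _ := h2
        _ ≤ 0 := hdS
    have h0 : (e1 - e1s) * (1 - (e1 + e1s)) = 0 := by
      nlinarith
    have : 1 - (e1 + e1s) = 0 := by
      rcases mul_eq_zero.mp h0 with h' | h'
      · linarith
      · exact h'
    linarith [he1.1, he1s.1]
  · exact h
  · -- e1 > e1s: d > 0, t ≤ 0, d*t ≥ 0 ⇒ t = 0 ⇒ e1 = e1s = 1/2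
    have : 1 - (e1 + e1s) = 0 := by nlinarith
    linarith [he1.1, he1s.1]
end

section
/- Let K ≥ 1 be an integer and σ_1, …, σ_K > 0 real numbers with σ_1² ≤ σ_2² ≤ … ≤ σ_K². Define f on strings (e_1, …, e_k) with entries e_j ∈ [1/2, 1] and k ≤ K by f((e_1, …, e_k)) = (1/2)·log[(1 + ∑_{j=1}^k e_j/σ_j²)·(1 + ∑_{j=1}^k (1 − e_j)/σ_j²)]. Then f is K-diminishing: for all strings M ⪯ N with entries in [1/2, 1] and |N| ≤ K − 1, and every a ∈ [1/2, 1], f(M ⊕ (a)) − f(M) ≥ f(N ⊕ (a)) − f(N). -/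
/-!
Appending an action `a` at weight `w = 1 / σ²` to a string whose two sums are `A` and `B`
raises `2 f` by `log (1 + a w / A) + log (1 + (1 - a) w / B)`. Extending `M` to `N` can only
increase `A` and `B`, since all terms are nonnegative, and can only decrease the weight of the
next stage, since the variances are nondecreasing; so this gain can only shrink.
-/

open Real

namespace List

variable {α M : Type*}

def stageSum [AddMonoid M] (g : ℕ × α → M) (L : List α) : M :=
  ((L.zipIdx.map Prod.swap).map g).sum

theorem stageSum_append_singleton [AddMonoid M] (g : ℕ × α → M) (L : List α) (x : α) :
    stageSum g (L ++ [x]) = stageSum g L + g (L.length, x) := by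
  simp [stageSum, zipIdx_append]

theorem stageSum_le_of_isPrefix [AddCommMonoid M] [PartialOrder M] [IsOrderedAddMonoid M]
    (g : ℕ × α → M) {L N : List α} (h : L <+: N) (hg : ∀ i, ∀ x ∈ N, 0 ≤ g (i, x)) :
    stageSum g L ≤ stageSum g N := by
  obtain ⟨T, rfl⟩ := h
  simp only [stageSum, zipIdx_append, map_append, sum_append]
  refine le_add_of_nonneg_right (sum_nonneg ?_)
  simp only [mem_map]
  rintro _ ⟨_, ⟨p, hp, rfl⟩, rfl⟩
  exact hg _ _ (mem_append_right L (fst_mem_of_mem_zipIdx hp))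

theorem stageSum_nonneg [AddCommMonoid M] [PartialOrder M] [IsOrderedAddMonoid M]
    (g : ℕ × α → M) {L : List α} (hg : ∀ i, ∀ x ∈ L, 0 ≤ g (i, x)) : 0 ≤ stageSum g L :=
  stageSum_le_of_isPrefix g nil_prefix hg

end List

open List

theorem log_add_sub_log_le_of_le {A A' c c' : ℝ} (hA : 0 < A) (hAA' : A ≤ A') (hc' : 0 ≤ c')
    (hcc' : c' ≤ c) : log (A' + c') - log A' ≤ log (A + c) - log A := by
  have hA' : 0 < A' := hA.trans_le hAA'
  have hc : 0 ≤ c := hc'.trans hcc'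
  rw [← log_div (by positivity) hA'.ne', ← log_div (by linarith) hA.ne', add_div, add_div,
    div_self hA'.ne', div_self hA.ne']
  exact log_le_log (by positivity) (by gcongr)

theorem log_mul_add_sub_log_mul_le_of_le {A A' B B' c c' d d' : ℝ} (hA : 0 < A) (hAA' : A ≤ A')
    (hB : 0 < B) (hBB' : B ≤ B') (hc' : 0 ≤ c') (hcc' : c' ≤ c) (hd' : 0 ≤ d') (hdd' : d' ≤ d) :
    log ((A' + c') * (B' + d')) - log (A' * B') ≤ log ((A + c) * (B + d)) - log (A * B) := by
  have hA' : 0 < A' := hA.trans_le hAA'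
  have hB' : 0 < B' := hB.trans_le hBB'
  rw [log_mul (by positivity) (by positivity), log_mul hA'.ne' hB'.ne',
    log_mul (by linarith) (by linarith), log_mul hA.ne' hB.ne']
  linarith [log_add_sub_log_le_of_le hA hAA' hc' hcc', log_add_sub_log_le_of_le hB hBB' hd' hdd']

theorem log_mul_one_add_stageSum_gain_le_of_isPrefix {g₁ g₂ : ℕ × ℝ → ℝ} {L N : List ℝ}
    (hLN : L <+: N) (hg₁ : ∀ i, ∀ x ∈ N, 0 ≤ g₁ (i, x)) (hg₂ : ∀ i, ∀ x ∈ N, 0 ≤ g₂ (i, x)) {a : ℝ}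
    (ha₁ : 0 ≤ g₁ (N.length, a)) (hLa₁ : g₁ (N.length, a) ≤ g₁ (L.length, a))
    (ha₂ : 0 ≤ g₂ (N.length, a)) (hLa₂ : g₂ (N.length, a) ≤ g₂ (L.length, a)) :
    log ((1 + stageSum g₁ (N ++ [a])) * (1 + stageSum g₂ (N ++ [a]))) -
        log ((1 + stageSum g₁ N) * (1 + stageSum g₂ N)) ≤
      log ((1 + stageSum g₁ (L ++ [a])) * (1 + stageSum g₂ (L ++ [a]))) -
        log ((1 + stageSum g₁ L) * (1 + stageSum g₂ L)) := by
  have hL₁ : 0 ≤ stageSum g₁ L := stageSum_nonneg g₁ fun i x hx => hg₁ i x (hLN.subset hx)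
  have hL₂ : 0 ≤ stageSum g₂ L := stageSum_nonneg g₂ fun i x hx => hg₂ i x (hLN.subset hx)
  simp only [stageSum_append_singleton, ← add_assoc]
  exact log_mul_add_sub_log_mul_le_of_le (by linarith)
    (by grw [stageSum_le_of_isPrefix g₁ hLN hg₁]) (by linarith)
    (by grw [stageSum_le_of_isPrefix g₂ hLN hg₂]) ha₁ hLa₁ ha₂ hLa₂

/-- Adaptive measurement information gain: with nondecreasing noise variances
`σ_1² ≤ … ≤ σ_K²` (all `σ_j > 0`), the objective
`f((e_1,…,e_k)) = (1/2)·log[(1 + ∑_j e_j/σ_j²)·(1 + ∑_j (1 − e_j)/σ_j²)]`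
is K-diminishing on strings with entries in `[1/2, 1]`.  Strings are lists of
reals; the entry at (0-based) index `i` is at stage `i+1`. -/
theorem stmt19 (K : ℕ) (hK : 1 ≤ K) (σ : ℕ → ℝ)
    (hσpos : ∀ j : ℕ, 1 ≤ j → j ≤ K → 0 < σ j)
    (hσmono : ∀ j : ℕ, 1 ≤ j → j + 1 ≤ K → (σ j) ^ 2 ≤ (σ (j + 1)) ^ 2)
    (f : List ℝ → ℝ)
    (hf : ∀ M : List ℝ, f M =
      (1 / 2) * Real.log
        ((1 + ((M.zipIdx.map Prod.swap).map (fun je => je.2 / (σ (je.1 + 1)) ^ 2)).sum) *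
          (1 + ((M.zipIdx.map Prod.swap).map (fun je => (1 - je.2) / (σ (je.1 + 1)) ^ 2)).sum))) :
    ∀ M N : List ℝ, M <+: N → N.length ≤ K - 1 →
      (∀ x ∈ N, 1 / 2 ≤ x ∧ x ≤ 1) →
      ∀ a : ℝ, 1 / 2 ≤ a → a ≤ 1 →
        f (M ++ [a]) - f M ≥ f (N ++ [a]) - f N := by
  intro M N hMN hN hmem a ha₁ ha₂
  have hσsq : MonotoneOn (fun j => σ j ^ 2) (Set.Icc 1 K) :=
    monotoneOn_of_le_succ Set.ordConnected_Icc fun j _ hj hj' => hσmono j hj.1 hj'.2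
  have hM : M.length ≤ N.length := hMN.length_le
  have hσM : 0 < σ (M.length + 1) ^ 2 := pow_pos (hσpos _ (by omega) (by omega)) 2
  have hσMN : σ (M.length + 1) ^ 2 ≤ σ (N.length + 1) ^ 2 :=
    hσsq ⟨by omega, by omega⟩ ⟨by omega, by omega⟩ (by omega)
  have key := log_mul_one_add_stageSum_gain_le_of_isPrefix hMN (a := a)
    (g₁ := fun je => je.2 / σ (je.1 + 1) ^ 2) (g₂ := fun je => (1 - je.2) / σ (je.1 + 1) ^ 2)
    (fun i x hx => div_nonneg (by linarith [hmem x hx]) (sq_nonneg _))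
    (fun i x hx => div_nonneg (by linarith [hmem x hx]) (sq_nonneg _))
    (div_nonneg (by linarith) (sq_nonneg _)) (div_le_div_of_nonneg_left (by linarith) hσM hσMN)
    (div_nonneg (by linarith) (sq_nonneg _)) (div_le_div_of_nonneg_left (by linarith) hσM hσMN)
  simp only [hf]
  unfold stageSum at key
  linarith
end
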